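/- Let k ≥ 4 be an even integer and let n ≥ k be a multiple of k/2. Suppose σ ≠ σ⁺ satisfies Ψ₀ and σ assigns some variable x_a with a ∈ Ξ_{ℓk/2} to FALSE. Then either (1) σ assigns some variable of C_{(ℓ+1)k/2} to FALSE, or (2) all variables in C_{(ℓ+1)k/2} are assigned TRUE by σ, and there exist variables x_c ∈ C_{(ℓ+2)k/2} and x_d ∈ C_{ℓk/2} \ {x_a} that are assigned FALSE by σ. -/

import Mathlib

open Real Finset

attribute [local instance] Classical.propDecidable

abbrev Assignment (n : ℕ) := Fin n → Bool
abbrev Clause (n : ℕ) := Fin n → Option Bool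
abbrev Cnf (n : ℕ) := List (Clause n)

/-- A clause is satisfied if it contains a true literal. -/
def clauseSat {n : ℕ} (σ : Assignment n) (c : Clause n) : Prop :=
  ∃ i : Fin n, c i = some (σ i)

/-- An assignment satisfies a CNF formula if every clause contains a true literal. -/
def satCnf {n : ℕ} (σ : Assignment n) (Φ : Cnf n) : Prop :=
  ∀ c ∈ Φ, clauseSat σ c

/-- The set of variables appearing (negated or not) in a clause. -/
noncomputable def clauseVars {n : ℕ} (c : Clause n) : Finset (Fin n) :=
  Finset.univ.filter (fun i => (c i).isSome)

/-- The number of clauses of `Φ` in which variable `i` appears (negated or not). -/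
noncomputable def degree {n : ℕ} (Φ : Cnf n) (i : Fin n) : ℕ :=
  (Φ.filter (fun c => (c i).isSome)).length

/-- `Φ ∈ Φ_{n,k,d}`: every clause has exactly `k` distinct variables and every
variable appears in at most `d` clauses. -/
def memPhi (n k d : ℕ) (Φ : Cnf n) : Prop :=
  (∀ c ∈ Φ, (clauseVars c).card = k) ∧ ∀ i : Fin n, degree Φ i ≤ d

/-- The number of variables assigned TRUE. -/
noncomputable def mTrue {n : ℕ} (σ : Assignment n) : ℕ :=
  (Finset.univ.filter (fun i => σ i = true)).card

/-- The number of variables assigned FALSE. -/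
noncomputable def nFalse {n : ℕ} (σ : Assignment n) : ℕ :=
  (Finset.univ.filter (fun i => σ i = false)).card

/-- The (unnormalised) weight `e^{β·m(σ)}·𝟙[σ ⊨ Φ]`. -/
noncomputable def weight {n : ℕ} (β : ℝ) (Φ : Cnf n) (σ : Assignment n) : ℝ :=
  if satCnf σ Φ then Real.exp (β * mTrue σ) else 0

/-- The partition function. -/
noncomputable def Zfun {n : ℕ} (β : ℝ) (Φ : Cnf n) : ℝ :=
  ∑ τ : Assignment n, weight β Φ τ

/-- The weighted k-SAT probability of a single assignment. -/
noncomputable def prob {n : ℕ} (β : ℝ) (Φ : Cnf n) (σ : Assignment n) : ℝ :=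
  weight β Φ σ / Zfun β Φ

/-- The weighted k-SAT probability of an event. -/
noncomputable def probEvent {n : ℕ} (β : ℝ) (Φ : Cnf n) (E : Assignment n → Prop) : ℝ :=
  (∑ τ : Assignment n, if E τ then weight β Φ τ else 0) / Zfun β Φ

/-- `m ∈ Ξ_i^π`, i.e. `m = π((i+j) mod n)` for some `0 ≤ j ≤ k/2 − 1`. -/
def inXi (n k : ℕ) (pp : Equiv.Perm (Fin n)) (i : ℕ) (m : Fin n) : Prop :=
  ∃ j < k / 2, ((pp.symm m : Fin n) : ℕ) = (i + j) % n

/-- The length-`k` clause `W^π_{i,ℓ} ∨ Π^π_{i+k/2}`: `x_ℓ` appears positively, all other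
variables of `C_i^π` and all variables of `C_{i+k/2}^π` appear negatively. -/
noncomputable def gClause (n k : ℕ) (pp : Equiv.Perm (Fin n)) (i : ℕ) (ℓ : Fin n) : Clause n :=
  fun m =>
    if m = ℓ then some true
    else if inXi n k pp i m ∨ inXi n k pp (i + k / 2) m then some false
    else none

/-- The formula `Ψ₀^π`, with clause set `{ W^π_{i,ℓ} ∨ Π^π_{i+k/2} : i ∈ N, ℓ ∈ Ξ_i^π }`. -/
noncomputable def Psi0 (n k : ℕ) (pp : Equiv.Perm (Fin n)) : Cnf n :=
  (List.range n).flatMap fun i =>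
    (List.finRange n).filterMap fun ℓ =>
      if inXi n k pp i ℓ then some (gClause n k pp i ℓ) else none

/-! A false variable `x_p` forces, through the clause `W_{p,p} ∨ Π_{p+k/2}`, another false variable
among the next `k − 1` positions. A step from the last false position of `Ξ_{ℓk/2}` can neither stay
in that block nor land in the all-true block `Ξ_{(ℓ+1)k/2}`, so it lands in `Ξ_{(ℓ+2)k/2}`. The
variable `x_d` comes in the same way from the clause `W_{ℓk/2,a} ∨ Π_{(ℓ+1)k/2}`. -/

open Fin.NatCast

section Psi0

variable {n k : ℕ} {pp : Equiv.Perm (Fin n)}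

theorem inXi_iff [NeZero n] {i : ℕ} {m : Fin n} :
    inXi n k pp i m ↔ ∃ j < k / 2, m = pp ((i + j : ℕ) : Fin n) := by
  simp only [inXi, ← Equiv.symm_apply_eq, Fin.ext_iff, Fin.val_natCast]

theorem inXi_mod_add {i c : ℕ} {m : Fin n} :
    inXi n k pp (i % n + c) m ↔ inXi n k pp (i + c) m := by
  simp only [inXi, add_assoc, Nat.mod_add_mod]

theorem gClause_mem_Psi0 {i : ℕ} {ℓ : Fin n} (hi : i < n) (hℓ : inXi n k pp i ℓ) :
    gClause n k pp i ℓ ∈ Psi0 n k pp := by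
  simp only [Psi0, List.mem_flatMap, List.mem_range, List.mem_filterMap, List.mem_finRange]
  exact ⟨i, hi, ℓ, trivial, by rw [if_pos hℓ]⟩

theorem clauseSat_gClause_iff {σ : Assignment n} {i : ℕ} {ℓ : Fin n} :
    clauseSat σ (gClause n k pp i ℓ) ↔
      σ ℓ = true ∨ ∃ m ≠ ℓ, (inXi n k pp i m ∨ inXi n k pp (i + k / 2) m) ∧ σ m = false := by
  constructor
  · rintro ⟨m, hm⟩
    unfold gClause at hm
    split_ifs at hm with hmℓ hwin
    · exact Or.inl (hmℓ ▸ (Option.some.inj hm).symm)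
    · exact Or.inr ⟨m, hmℓ, hwin, (Option.some.inj hm).symm⟩
  · rintro (hℓ | ⟨m, hmℓ, hwin, hm⟩)
    · exact ⟨ℓ, by simp [gClause, hℓ]⟩
    · exact ⟨m, by simp [gClause, hmℓ, hwin, hm]⟩

theorem exists_false_of_satCnf_Psi0 {σ : Assignment n} (hsat : satCnf σ (Psi0 n k pp))
    {i : ℕ} {ℓ : Fin n} (hℓ : inXi n k pp i ℓ) (hℓF : σ ℓ = false) :
    ∃ m ≠ ℓ, (inXi n k pp i m ∨ inXi n k pp (i + k / 2) m) ∧ σ m = false := by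
  have hn : 0 < n := Fin.pos ℓ
  have hmem := gClause_mem_Psi0 (Nat.mod_lt i hn) ((inXi_mod_add (c := 0)).2 hℓ)
  rcases clauseSat_gClause_iff.1 (hsat _ hmem) with hℓT | ⟨m, hmℓ, hwin, hmF⟩
  · simp [hℓF] at hℓT
  · exact ⟨m, hmℓ, hwin.imp (inXi_mod_add (c := 0)).1 inXi_mod_add.1, hmF⟩

theorem exists_false_ahead_of_satCnf_Psi0 [NeZero n] {σ : Assignment n}
    (hsat : satCnf σ (Psi0 n k pp)) (hk : 0 < k / 2) {p : ℕ} (hp : σ (pp (p : Fin n)) = false) :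
    ∃ s, 0 < s ∧ s < k / 2 + k / 2 ∧ σ (pp ((p + s : ℕ) : Fin n)) = false := by
  obtain ⟨m, hmp, hwin, hmF⟩ :=
    exists_false_of_satCnf_Psi0 hsat ((inXi_iff (i := p)).2 ⟨0, hk, by simp⟩) hp
  rcases hwin with hm | hm <;> obtain ⟨j, hj, rfl⟩ := inXi_iff.1 hm
  · refine ⟨j, Nat.pos_of_ne_zero ?_, by omega, hmF⟩
    rintro rfl
    simp at hmp
  · exact ⟨k / 2 + j, by omega, by omega, by rwa [← add_assoc]⟩

end Psi0

theorem exists_false_two_blocks_ahead (f : ℕ → Bool) {h b : ℕ}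
    (hstep : ∀ p, f p = false → ∃ s, 0 < s ∧ s < h + h ∧ f (p + s) = false)
    (hfalse : ∃ t < h, f (b + t) = false) (hnext : ∀ j < h, f (b + h + j) = true) :
    ∃ j < h, f (b + h + h + j) = false := by
  obtain ⟨t₀, ht₀, hft₀⟩ := hfalse
  set t := Nat.findGreatest (fun t => f (b + t) = false) (h - 1)
  have ht : t < h := (Nat.findGreatest_le (h - 1)).trans_lt (by omega)
  have hft : f (b + t) = false := Nat.findGreatest_spec (P := fun t => f (b + t) = false)
    (by omega : t₀ ≤ h - 1) hft₀
  obtain ⟨s, hs0, hs, hfs⟩ := hstep _ hft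
  rw [add_assoc] at hfs
  by_cases h₁ : t + s < h
  · exact absurd hfs (Nat.findGreatest_is_greatest (P := fun t => f (b + t) = false)
      (k := t + s) (by omega) (Nat.le_sub_one_of_lt h₁))
  by_cases h₂ : t + s < h + h
  · have := hnext (t + s - h) (by omega)
    rw [show b + h + (t + s - h) = b + (t + s) by omega, hfs] at this
    exact absurd this Bool.false_ne_true
  · refine ⟨t + s - (h + h), by omega, ?_⟩
    rwa [show b + h + h + (t + s - (h + h)) = b + (t + s) by omega]

theorem stmt5_general (k n : ℕ)
    (σ : Assignment n) (hsat : satCnf σ (Psi0 n k (Equiv.refl (Fin n))))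
    (ℓ : ℕ) (a : Fin n) (ha : inXi n k (Equiv.refl (Fin n)) (ℓ * (k / 2)) a)
    (haF : σ a = false) :
    (∃ b : Fin n, inXi n k (Equiv.refl (Fin n)) ((ℓ + 1) * (k / 2)) b ∧ σ b = false) ∨
    ((∀ m : Fin n, inXi n k (Equiv.refl (Fin n)) ((ℓ + 1) * (k / 2)) m → σ m = true) ∧
      (∃ c : Fin n, inXi n k (Equiv.refl (Fin n)) ((ℓ + 2) * (k / 2)) c ∧ σ c = false) ∧
      (∃ d : Fin n, inXi n k (Equiv.refl (Fin n)) (ℓ * (k / 2)) d ∧ d ≠ a ∧ σ d = false)) := by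
  have : NeZero n := NeZero.of_pos (Fin.pos a)
  refine or_iff_not_imp_left.2 fun hnext => ?_
  simp only [not_exists, not_and, Bool.not_eq_false] at hnext
  obtain ⟨t, ht, rfl⟩ := inXi_iff.1 ha
  refine ⟨hnext, ?_, ?_⟩
  · obtain ⟨j, hj, hjF⟩ := exists_false_two_blocks_ahead (fun p : ℕ => σ (p : Fin n)) (h := k / 2)
      (fun _ hp => exists_false_ahead_of_satCnf_Psi0 hsat (by omega) hp) ⟨t, ht, haF⟩
      (fun j hj => hnext _ (inXi_iff.2 ⟨j, hj, by simp [add_one_mul]⟩))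
    exact ⟨_, inXi_iff.2 ⟨j, hj, rfl⟩, by simpa [add_mul, two_mul, add_assoc] using hjF⟩
  · obtain ⟨d, hda, hd | hd, hdF⟩ := exists_false_of_satCnf_Psi0 hsat ha haF
    · exact ⟨d, hd, hda, hdF⟩
    · rw [← add_one_mul] at hd
      simp [hnext d hd] at hdF

/-- the Claim: if `σ ≠ σ⁺` satisfies `Ψ₀` and `σ` assigns `x_a` with
`a ∈ Ξ_{ℓk/2}` to FALSE, then either some variable of `C_{(ℓ+1)k/2}` is FALSE under `σ`,
or all variables of `C_{(ℓ+1)k/2}` are TRUE and there are `x_c ∈ C_{(ℓ+2)k/2}` and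
`x_d ∈ C_{ℓk/2} \ {x_a}` assigned FALSE by `σ`. -/
theorem stmt5 (k n : ℕ) (hk4 : 4 ≤ k) (hke : Even k) (hkn : k ≤ n) (hdvd : k / 2 ∣ n)
    (σ : Assignment n) (hsat : satCnf σ (Psi0 n k (Equiv.refl (Fin n))))
    (hne : σ ≠ fun _ => true)
    (ℓ : ℕ) (a : Fin n) (ha : inXi n k (Equiv.refl (Fin n)) (ℓ * (k / 2)) a)
    (haF : σ a = false) :
    (∃ b : Fin n, inXi n k (Equiv.refl (Fin n)) ((ℓ + 1) * (k / 2)) b ∧ σ b = false) ∨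
    ((∀ m : Fin n, inXi n k (Equiv.refl (Fin n)) ((ℓ + 1) * (k / 2)) m → σ m = true) ∧
      (∃ c : Fin n, inXi n k (Equiv.refl (Fin n)) ((ℓ + 2) * (k / 2)) c ∧ σ c = false) ∧
      (∃ d : Fin n, inXi n k (Equiv.refl (Fin n)) (ℓ * (k / 2)) d ∧ d ≠ a ∧ σ d = false)) :=
  stmt5_general k n σ hsat ℓ a ha haF
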